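/- The global ledger is consistent with respect to the marketplace step relation: if a marketplace state ⟨C, D, B, t, G, i, L, E⟩ steps to a state ⟨C', D', B', t', G', i', L', E'⟩ by any of the rules Issue, Join, Join-Or, Fail, or Tick, then every transaction in L also occurs in L' (the ledger only grows: new transactions are appended and existing transactions are never removed or modified). -/

import Mathlib

/-- Currencies. -/
inductive Currency
  | USD | EUR
deriving DecidableEq, Repr

/-- Addresses of external data providers. -/
abbrev Address := ℕ

/-- Parties (participants). -/
abbrev Party := ℕ

/-- Findel primitives. -/
inductive Primitive
  | Zero : Primitive
  | One : Currency → Primitive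
  | Scale : ℕ → Primitive → Primitive
  | ScaleObs : Address → Primitive → Primitive
  | Give : Primitive → Primitive
  | And : Primitive → Primitive → Primitive
  | Or : Primitive → Primitive → Primitive
  | If : Address → Primitive → Primitive → Primitive
  | Timebound : ℕ → ℕ → Primitive → Primitive
deriving DecidableEq, Repr

/-- A ledger transaction: sender, receiver, amount, currency. -/
structure Transaction where
  sender : Party
  receiver : Party
  amount : ℕ
  currency : Currency
deriving DecidableEq, Repr

/-- Balances of the parties, per currency. -/
abbrev Balance := Party → Currency → ℤ

/-- An external gateway: a partial map from addresses to values. -/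
abbrev Gateway := Address → Option ℕ

/-- A Findel contract: id, description id, primitive, issuer, owner,
proposed owner, scale factor. -/
structure FindelContract where
  id : ℕ
  dscId : ℕ
  prim : Primitive
  issuer : Party
  owner : Party
  proposedOwner : Party
  scale : ℕ
deriving DecidableEq, Repr

/-- A Findel description: id, primitive and the time window in which
joining/execution is allowed. -/
structure Description where
  id : ℕ
  prim : Primitive
  startT : ℕ
  endT : ℕ
deriving DecidableEq, Repr

/-- Update balances: transfer `s` units of `cur` from `I` to `O`. -/
def updBal (B : Balance) (I O : Party) (s : ℕ) (cur : Currency) : Balance :=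
  fun p c =>
    if c = cur then
      B p c + (if p = O then (s : ℤ) else 0) - (if p = I then (s : ℤ) else 0)
    else B p c

/-- The execution function for Findel primitives.  Arguments: the primitive,
the contract id, the description id, the scale factor, the issuer, the owner,
the current time, the gateway, the current balances, the ledger and a fresh id.
It either fails (`none`) or returns the updated balances, the list of newly
generated contracts, a new fresh id and the updated ledger. -/
def exec : Primitive → ℕ → ℕ → ℕ → Party → Party → ℕ → Gateway → Balance →
    List Transaction → ℕ →
    Option (Balance × List FindelContract × ℕ × List Transaction)
  | .Zero, _, _, _, _, _, _, _, B, L, i => some (B, [], i, L)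
  | .One cur, _, _, s, I, O, _, _, B, L, i =>
      some (updBal B I O s cur, [], i, L ++ [⟨I, O, s, cur⟩])
  | .Scale k c, cid, did, s, I, O, t, G, B, L, i =>
      exec c cid did (k * s) I O t G B L i
  | .ScaleObs a c, cid, did, s, I, O, t, G, B, L, i =>
      match G a with
      | none => none
      | some k => exec c cid did (k * s) I O t G B L i
  | .Give c, cid, did, s, I, O, t, G, B, L, i =>
      exec c cid did s O I t G B L i
  | .And c₁ c₂, cid, did, s, I, O, t, G, B, L, i =>
      match exec c₁ cid did s I O t G B L i with
      | none => none
      | some (B', Cs₁, i', L') =>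
        match exec c₂ cid did s I O t G B' L' i' with
        | none => none
        | some (B'', Cs₂, i'', L'') => some (B'', Cs₁ ++ Cs₂, i'', L'')
  | .Or c₁ c₂, _, did, s, I, O, _, _, B, L, i =>
      some (B, [⟨i, did, .Or c₁ c₂, I, O, O, s⟩], i + 1, L)
  | .If a c₁ c₂, cid, did, s, I, O, t, G, B, L, i =>
      match G a with
      | none => none
      | some v =>
        if v ≠ 0 then exec c₁ cid did s I O t G B L i
        else exec c₂ cid did s I O t G B L i
  | .Timebound t₀ t₁ c, cid, did, s, I, O, t, G, B, L, i =>
      if t₀ ≤ t ∧ t ≤ t₁ then exec c cid did s I O t G B L i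
      else if t < t₀ then
        some (B, [⟨i, did, .Timebound t₀ t₁ c, I, O, O, s⟩], i + 1, L)
      else none

/-- Events triggered during the execution. -/
inductive Event
  | IssuedFor : Party → ℕ → Event
  | Executed : ℕ → Event
  | Deleted : ℕ → Event
deriving DecidableEq, Repr

/-- The marketplace state ⟨C, D, B, t, G, i, L, E⟩. -/
structure State where
  contracts : List FindelContract
  descriptions : List Description
  balance : Balance
  time : ℕ
  gateway : Gateway
  freshId : ℕ
  ledger : List Transaction
  events : List Event

/-- Labels for the rules of the marketplace step relation. -/
inductive Rule
  | issue | join | joinOr | fail | tick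
deriving DecidableEq, Repr

/-- The marketplace step relation, labeled by the applied rule. -/
inductive Step : Rule → State → State → Prop
  | issue (S : State) (dsc : Description) (I pO : Party) (s : ℕ)
      (hdsc : dsc ∈ S.descriptions) :
      Step .issue S
        { S with
          contracts := ⟨S.freshId, dsc.id, dsc.prim, I, I, pO, s⟩ :: S.contracts,
          freshId := S.freshId + 1,
          events := .IssuedFor pO S.freshId :: S.events }
  | join (S : State) (c : FindelContract) (dsc : Description)
      (B' : Balance) (Cs : List FindelContract) (i' : ℕ) (L' : List Transaction)
      (hc : c ∈ S.contracts)
      (hunjoined : c.owner = c.issuer)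
      (hdsc : dsc ∈ S.descriptions) (hdid : dsc.id = c.dscId)
      (hnotOr : ∀ c₁ c₂, c.prim ≠ .Or c₁ c₂)
      (htime : dsc.startT ≤ S.time ∧ S.time ≤ dsc.endT)
      (hexec : exec c.prim c.id c.dscId c.scale c.issuer c.proposedOwner
        S.time S.gateway S.balance S.ledger S.freshId = some (B', Cs, i', L')) :
      Step .join S
        { S with
          contracts := Cs ++ S.contracts.erase c,
          balance := B', freshId := i', ledger := L',
          events := .Executed c.id :: S.events }
  | joinOr (S : State) (c : FindelContract) (dsc : Description)
      (c₁ c₂ d : Primitive)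
      (B' : Balance) (Cs : List FindelContract) (i' : ℕ) (L' : List Transaction)
      (hc : c ∈ S.contracts)
      (hunjoined : c.owner = c.issuer)
      (hdsc : dsc ∈ S.descriptions) (hdid : dsc.id = c.dscId)
      (hOr : c.prim = .Or c₁ c₂)
      (hchoice : d = c₁ ∨ d = c₂)
      (htime : dsc.startT ≤ S.time ∧ S.time ≤ dsc.endT)
      (hexec : exec d c.id c.dscId c.scale c.issuer c.proposedOwner
        S.time S.gateway S.balance S.ledger S.freshId = some (B', Cs, i', L')) :
      Step .joinOr S
        { S with
          contracts := Cs ++ S.contracts.erase c,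
          balance := B', freshId := i', ledger := L',
          events := .Executed c.id :: S.events }
  | fail (S : State) (c : FindelContract) (dsc : Description)
      (hc : c ∈ S.contracts)
      (hunjoined : c.owner = c.issuer)
      (hdsc : dsc ∈ S.descriptions) (hdid : dsc.id = c.dscId)
      (hnotOr : ∀ c₁ c₂, c.prim ≠ .Or c₁ c₂)
      (htime : dsc.startT ≤ S.time ∧ S.time ≤ dsc.endT)
      (hexec : exec c.prim c.id c.dscId c.scale c.issuer c.proposedOwner
        S.time S.gateway S.balance S.ledger S.freshId = none) :
      Step .fail S
        { S with
          contracts := S.contracts.erase c,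
          events := .Deleted c.id :: S.events }
  | tick (S : State) :
      Step .tick S { S with time := S.time + 1 }

/-- A marketplace state is consistent when all contract identifiers are
pairwise distinct and strictly smaller than the fresh id. -/
def consistent (S : State) : Prop :=
  S.contracts.Pairwise (fun c c' => c.id ≠ c'.id) ∧
  ∀ c ∈ S.contracts, c.id < S.freshId

theorem exec_ledger_isPrefix {p : Primitive} {cid did s : ℕ} {I O : Party} {t : ℕ} {G : Gateway}
    {B B' : Balance} {L L' : List Transaction} {i i' : ℕ} {Cs : List FindelContract}
    (h : exec p cid did s I O t G B L i = some (B', Cs, i', L')) : L <+: L' := by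
  induction p generalizing s I O B L i B' Cs i' L' with
  | Zero | Or =>
    simp only [exec, Option.some.injEq, Prod.mk.injEq] at h
    exact h.2.2.2 ▸ List.prefix_refl L
  | One =>
    simp only [exec, Option.some.injEq, Prod.mk.injEq] at h
    exact h.2.2.2 ▸ List.prefix_append L _
  | Scale _ _ ih | Give _ ih => exact ih h
  | ScaleObs a _ ih =>
    cases hG : G a <;> simp only [exec, hG, reduceCtorEq] at h
    exact ih h
  | And c₁ c₂ ih₁ ih₂ =>
    simp only [exec] at h
    split at h
    · contradiction
    rename_i h₁
    split at h
    · contradiction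
    rename_i h₂
    simp only [Option.some.injEq, Prod.mk.injEq] at h
    exact h.2.2.2 ▸ (ih₁ h₁).trans (ih₂ h₂)
  | If a _ _ ih₁ ih₂ =>
    cases hG : G a <;> simp only [exec, hG, reduceCtorEq] at h
    split at h
    · exact ih₁ h
    · exact ih₂ h
  | Timebound _ _ _ ih =>
    simp only [exec] at h
    split at h
    · exact ih h
    split at h <;> simp only [Option.some.injEq, Prod.mk.injEq, reduceCtorEq] at h
    exact h.2.2.2 ▸ List.prefix_refl L

theorem Step.ledger_isPrefix {r : Rule} {S S' : State} (h : Step r S S') :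
    S.ledger <+: S'.ledger := by
  cases h
  case join hexec | joinOr hexec => exact exec_ledger_isPrefix hexec
  all_goals exact List.prefix_refl _

/-- along any marketplace step, the global ledger only grows:
every transaction of the original ledger also occurs in the new ledger. -/
theorem step_ledger_grows
    (r : Rule) (S S' : State) (h : Step r S S') :
    ∀ tx ∈ S.ledger, tx ∈ S'.ledger :=
  fun _ htx => h.ledger_isPrefix.subset htx
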